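/- Words a₁a₂...aₙ with 1 ≤ aᵢ ≤ 2i−1 for each i are in bijection with standard permutations of {±1,...,±n}, via the arc-diagram encoding; in particular the number of such words is (2n−1)!!. -/

import Mathlib

/-- A function `π : Fin (2n) → ℤ` listing each element of `{±1, …, ±n}`
exactly once. -/
def IsSgnPermF (n : ℕ) (π : Fin (2*n) → ℤ) : Prop :=
  Finset.univ.image π = (Finset.Icc (-(n:ℤ)) (n:ℤ)).erase 0

/-- A standard permutation of `{±1, …, ±n}`: each `i` appears before `-i`, and
the negative entries appear in the order `-1, -2, …, -n`. -/
def IsStdPermF (n : ℕ) (π : Fin (2*n) → ℤ) : Prop :=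
  IsSgnPermF n π ∧
  (∀ k l, 0 < π k → π l = -π k → k < l) ∧
  (∀ k l, π k < 0 → π l < 0 → (k < l ↔ π l < π k))

/-!
Reading the arc diagram backwards, every standard permutation of `{±1, …, ±(k+1)}` arises exactly
once from a standard permutation of `{±1, …, ±k}` by inserting `k + 1` into one of the `2k + 1`
slots and appending `-(k + 1)` at the end (the rightmost right endpoint). Iterating, words with
`1 ≤ aᵢ ≤ 2i - 1` parametrize standard permutations, and there are `1 · 3 ⋯ (2n - 1)` of them.
The word is read off again because erasing all entries of absolute value `> k + 1` leaves the
permutation built by the first `k + 1` insertions, in which `k + 1` stands at position `a_{k+1}`.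
-/

open Finset

theorem List.countP_take_add_one_eq_idxOf_filter {α : Type*} [DecidableEq α] {L : List α}
    (hL : L.Nodup) {i : ℕ} (hi : i < L.length) {p : α → Bool} (hp : p L[i]) :
    (L.take (i + 1)).countP p = (L.filter p).idxOf L[i] + 1 := by
  have hsplit : L.filter p = (L.take i).filter p ++ L[i] :: (L.drop (i + 1)).filter p := by
    conv_lhs => rw [← List.take_append_drop i L, List.drop_eq_getElem_cons hi]
    rw [List.filter_append, List.filter_cons_of_pos hp]
  have hnot : L[i] ∉ (L.take i).filter p := fun h =>
    List.disjoint_take_drop hL (le_refl i) (List.mem_of_mem_filter h)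
      (List.drop_eq_getElem_cons hi ▸ List.mem_cons_self)
  rw [hsplit, ← List.take_concat_get' L i hi, List.countP_append,
    List.idxOf_append_of_notMem hnot, List.idxOf_cons_self, List.countP_eq_length_filter]
  simp [hp]

theorem List.countP_ofFn_eq_card_filter {α : Type*} {N : ℕ} (f : Fin N → α) (P : α → Prop)
    [DecidablePred P] : (List.ofFn f).countP (P ·) = #{i | P (f i)} := by
  rw [← Multiset.coe_countP, ← Fin.univ_val_map, Multiset.countP_map]
  rfl

theorem card_filter_le_and_eq_countP_take_ofFn {α : Type*} {N : ℕ} (f : Fin N → α) (p : Fin N)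
    (P : α → Prop) [DecidablePred P] :
    #{j | j ≤ p ∧ P (f j)} = ((List.ofFn f).take (p + 1)).countP (P ·) := by
  rw [← Fin.ofFn_take_eq_take_ofFn p.2, List.countP_ofFn_eq_card_filter]
  refine card_bij' (fun j hj => ⟨j, Nat.lt_succ_of_le (mem_filter.1 hj).2.1⟩)
    (fun i _ => Fin.castLE p.2 i)
    (fun j hj => mem_filter.2 ⟨mem_univ _, (mem_filter.1 hj).2.2⟩)
    (fun i hi => mem_filter.2 ⟨mem_univ _, Nat.le_of_lt_succ i.2, (mem_filter.1 hi).2⟩)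
    (fun _ _ => rfl) (fun _ _ => rfl)

theorem ncard_words_eq_doubleFactorial (n : ℕ) :
    {w : Fin n → ℕ | ∀ i, 1 ≤ w i ∧ w i ≤ 2 * (i : ℕ) + 1}.ncard =
      Nat.doubleFactorial (2 * n - 1) := by
  have hset : {w : Fin n → ℕ | ∀ i, 1 ≤ w i ∧ w i ≤ 2 * (i : ℕ) + 1} =
      ↑(Fintype.piFinset fun i : Fin n => Icc 1 (2 * (i : ℕ) + 1)) := by
    ext w
    simp only [Set.mem_ofPred_eq, mem_coe, Fintype.mem_piFinset, mem_Icc]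
  rw [hset, Set.ncard_coe_finset, Fintype.card_piFinset]
  simp only [Nat.card_Icc, Nat.add_sub_cancel]
  rw [Fin.prod_univ_eq_prod_range (fun i => 2 * i + 1)]
  rcases n with _ | n
  · rfl
  · rw [Finset.prod_range_succ', show 2 * (n + 1) - 1 = 2 * n + 1 by omega,
      Nat.doubleFactorial_eq_prod_odd]
    exact mul_one _

theorem isSgnPermF_iff_forall_mem_ofFn {n : ℕ} {π : Fin (2 * n) → ℤ} :
    IsSgnPermF n π ↔ ∀ m, m ∈ List.ofFn π ↔ m ≠ 0 ∧ -(n : ℤ) ≤ m ∧ m ≤ n := by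
  simp [IsSgnPermF, Finset.ext_iff, List.mem_ofFn]

theorem IsSgnPermF.injective {n : ℕ} {π : Fin (2 * n) → ℤ} (h : IsSgnPermF n π) :
    Function.Injective π := by
  have hcard : (univ.image π).card = (univ : Finset (Fin (2 * n))).card := by
    rw [h, card_erase_of_mem (by simp), Int.card_Icc, card_univ, Fintype.card_fin]
    omega
  simpa using Finset.card_image_iff.1 hcard

namespace StdPerm

def MayPrecede (x y : ℤ) : Prop := (y = -x → 0 < x) ∧ (x < 0 → y < 0 → y < x)

def IsStdList (n : ℕ) (L : List ℤ) : Prop :=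
  L.Nodup ∧ (∀ m, m ∈ L ↔ m ≠ 0 ∧ -(n : ℤ) ≤ m ∧ m ≤ n) ∧ L.Pairwise MayPrecede

def insertArc (a : ℕ) (v : ℤ) (L : List ℤ) : List ℤ := L.take a ++ v :: (L.drop a ++ [-v])

/-- Step `k` draws the arc of `k + 1`: left endpoint at the 0-based position `a k`, right endpoint
to the right of everything. -/
def arcList (a : ℕ → ℕ) : ℕ → List ℤ
  | 0 => []
  | k + 1 => insertArc (a k) (k + 1) (arcList a k)

section insertArc

variable {a : ℕ} {v : ℤ} {L : List ℤ}

theorem perm_insertArc : (insertArc a v L).Perm (v :: -v :: L) :=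
  List.perm_middle.trans <| .cons v <| by
    rw [← List.append_assoc, List.take_append_drop]; exact List.perm_append_singleton _ _

theorem mem_insertArc {m : ℤ} : m ∈ insertArc a v L ↔ m = v ∨ m = -v ∨ m ∈ L := by
  simp [perm_insertArc.mem_iff]

theorem sublist_insertArc : L.Sublist (insertArc a v L) := by
  conv_lhs => rw [← List.take_append_drop a L]
  exact .append_left (.cons _ (List.sublist_append_left _ _)) _

theorem filter_insertArc {p : ℤ → Bool} (hv : p v = false) (hnv : p (-v) = false) :
    (insertArc a v L).filter p = L.filter p := by
  simp only [insertArc, List.filter_append, List.filter_cons, hv, hnv, List.filter_nil,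
    Bool.false_eq_true, if_false, List.append_nil]
  rw [← List.filter_append, List.take_append_drop]

theorem pairwise_insertArc {R : ℤ → ℤ → Prop} (hL : L.Pairwise R)
    (hv : ∀ x ∈ L, R x v ∧ R v x ∧ R x (-v)) (hvv : R v (-v)) :
    (insertArc a v L).Pairwise R := by
  rw [← List.take_append_drop a L] at hL hv
  simp only [List.mem_append] at hv
  obtain ⟨htake, hdrop, hcross⟩ := List.pairwise_append.1 hL
  rw [insertArc, List.pairwise_append, List.pairwise_cons, List.pairwise_append]
  simp only [List.mem_append, List.mem_cons, List.not_mem_nil, or_false]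
  refine ⟨htake, ⟨?_, hdrop, List.pairwise_singleton _ _, ?_⟩, ?_⟩
  · rintro y (hy | rfl)
    exacts [(hv y (.inr hy)).2.1, hvv]
  · rintro x hx _ rfl
    exact (hv x (.inr hx)).2.2
  · rintro x hx y (rfl | hy | rfl)
    exacts [(hv x (.inl hx)).1, hcross x hx y hy, (hv x (.inl hx)).2.2]

end insertArc

namespace IsStdList

variable {n : ℕ} {L : List ℤ}

theorem nil : IsStdList 0 [] :=
  ⟨List.nodup_nil, fun m => by simp only [List.not_mem_nil, false_iff]; omega, List.Pairwise.nil⟩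

theorem insertArc (h : IsStdList n L) (a : ℕ) : IsStdList (n + 1) (insertArc a (n + 1) L) := by
  obtain ⟨hnd, hmem, hpw⟩ := h
  refine ⟨perm_insertArc.nodup_iff.2 ?_, fun m => ?_, pairwise_insertArc hpw ?_ ?_⟩
  · simp only [List.nodup_cons, List.mem_cons, hmem, not_or]
    exact ⟨⟨by omega, by omega⟩, by omega, hnd⟩
  · rw [mem_insertArc, hmem]; push_cast; omega
  · intro x hx
    have := (hmem x).1 hx
    simp only [MayPrecede]
    omega
  · simp only [MayPrecede]; omega

theorem of_insertArc {a : ℕ} (h : IsStdList (n + 1) (StdPerm.insertArc a (n + 1) L)) :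
    IsStdList n L := by
  obtain ⟨hnd, hmem, hpw⟩ := h
  simp only [perm_insertArc.nodup_iff, List.nodup_cons, List.mem_cons, not_or] at hnd
  obtain ⟨⟨-, hv⟩, hnv, hnd⟩ := hnd
  refine ⟨hnd, fun m => ⟨fun hm => ?_, fun hm => ?_⟩, hpw.sublist sublist_insertArc⟩
  · have hmv : m ≠ n + 1 := by rintro rfl; exact hv hm
    have hmnv : m ≠ -(n + 1) := by rintro rfl; exact hnv hm
    have := (hmem m).1 (mem_insertArc.2 (.inr (.inr hm)))
    omega
  · have := mem_insertArc.1 ((hmem m).2 (by omega))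
    exact (this.resolve_left (by omega)).resolve_left (by omega)

theorem length_eq (h : IsStdList n L) : L.length = 2 * n := by
  have hfin : L.toFinset = (Icc (-(n : ℤ)) n).erase 0 := by
    ext m
    simp only [List.mem_toFinset, h.2.1, mem_erase, mem_Icc]
  rw [← List.toFinset_card_of_nodup h.1, hfin, card_erase_of_mem (by simp), Int.card_Icc]
  omega

theorem exists_eq_append_neg (h : IsStdList (n + 1) L) : ∃ C, L = C ++ [-(n + 1 : ℤ)] := by
  obtain ⟨-, hmem, hpw⟩ := h
  obtain ⟨C, D, rfl⟩ := List.append_of_mem ((hmem (-(n + 1 : ℤ))).2 (by push_cast; omega))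
  refine ⟨C, ?_⟩
  rw [← List.singleton_append, ← List.append_assoc, List.pairwise_append] at hpw
  obtain ⟨-, -, hcross⟩ := hpw
  have hpos : ∀ d ∈ D, 0 < d := by
    intro d hd
    have := (hmem d).1 (by simp [hd])
    have := hcross (-(n + 1)) (by simp) d hd
    simp only [MayPrecede] at this
    omega
  -- `-d` can stand neither before `d` nor among the positive entries after `-(n + 1)`.
  suffices D = [] by simp [this]
  refine List.eq_nil_iff_forall_not_mem.2 fun d hd => ?_
  have hd0 := hpos d hd
  have hneg := (hmem (-d)).2 (by have := (hmem d).1 (by simp [hd]); omega)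
  rw [← List.singleton_append, ← List.append_assoc, List.mem_append] at hneg
  rcases hneg with hneg | hneg
  · have := hcross _ hneg d hd
    simp only [MayPrecede] at this
    omega
  · have := hpos _ hneg
    omega

theorem exists_eq_insertArc (h : IsStdList (n + 1) L) :
    ∃ a ≤ 2 * n, ∃ L', IsStdList n L' ∧ L = StdPerm.insertArc a (n + 1) L' := by
  obtain ⟨C, rfl⟩ := h.exists_eq_append_neg
  have hvC : (n + 1 : ℤ) ∈ C := by
    have := (h.2.1 (n + 1)).2 (by omega)
    simp only [List.mem_append, List.mem_singleton] at this
    exact this.resolve_right (by omega)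
  obtain ⟨A, B, rfl⟩ := List.append_of_mem hvC
  have hins : (A ++ (n + 1 : ℤ) :: B) ++ [-(n + 1 : ℤ)] =
      StdPerm.insertArc A.length (n + 1) (A ++ B) := by
    simp [StdPerm.insertArc]
  rw [hins] at h ⊢
  have hstd := h.of_insertArc
  refine ⟨A.length, ?_, A ++ B, hstd, rfl⟩
  have := hstd.length_eq
  simp only [List.length_append] at this
  omega

end IsStdList

section arcList

variable (a : ℕ → ℕ)

theorem isStdList_arcList : ∀ n, IsStdList n (arcList a n)
  | 0 => .nil
  | n + 1 => (isStdList_arcList n).insertArc (a n)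

theorem arcList_congr {b : ℕ → ℕ} : ∀ {n}, (∀ i < n, a i = b i) → arcList a n = arcList b n
  | 0, _ => rfl
  | n + 1, h => by
    rw [arcList, arcList, h n n.lt_succ_self, arcList_congr fun i hi => h i (by omega)]

theorem filter_arcList {m k : ℕ} (hmk : m ≤ k) :
    (arcList a k).filter (fun x : ℤ => |x| ≤ m) = arcList a m := by
  induction k, hmk using Nat.le_induction with
  | base =>
    refine List.filter_eq_self.2 fun x hx => ?_
    have := ((isStdList_arcList a m).2.1 x).1 hx
    simpa [abs_le] using ⟨this.2.1, this.2.2⟩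
  | succ k hmk ih =>
    rw [arcList, filter_insertArc (by simp [abs_le]; omega) (by simp [abs_le]; omega), ih]

theorem idxOf_filter_arcList {m n : ℕ} (hmn : m < n) (ha : a m ≤ 2 * m) :
    ((arcList a n).filter (fun x : ℤ => |x| ≤ (m : ℤ) + 1)).idxOf ((m : ℤ) + 1) = a m := by
  have hstd := isStdList_arcList a m
  have hv : (m + 1 : ℤ) ∉ (arcList a m).take (a m) := fun h =>
    absurd ((hstd.2.1 _).1 (List.take_subset _ _ h)).2.2 (by omega)
  rw [← Nat.cast_succ, filter_arcList a hmn, arcList, insertArc, Nat.cast_succ,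
    List.idxOf_append_of_notMem hv, List.idxOf_cons_self, List.length_take, hstd.length_eq,
    add_zero, min_eq_left ha]

end arcList

theorem IsStdList.exists_eq_arcList : ∀ {n : ℕ} {L : List ℤ}, IsStdList n L →
    ∃ a : ℕ → ℕ, (∀ i < n, a i ≤ 2 * i) ∧ arcList a n = L
  | 0, L, h => ⟨fun _ => 0, by omega, by
      refine (List.eq_nil_iff_forall_not_mem.2 fun x hx => ?_).symm
      have := (h.2.1 x).1 hx
      omega⟩
  | n + 1, L, h => by
    obtain ⟨b, hb, L', hL', rfl⟩ := h.exists_eq_insertArc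
    obtain ⟨a, ha, rfl⟩ := hL'.exists_eq_arcList
    refine ⟨fun i => if i = n then b else a i, fun i hi => ?_, ?_⟩
    · dsimp only
      split_ifs with h
      · omega
      · exact ha i (by omega)
    · rw [arcList, if_pos rfl, arcList_congr _ fun i hi => if_neg (by omega)]

theorem pairwise_mayPrecede_ofFn_iff {N : ℕ} {π : Fin N → ℤ} (hπ : ∀ j, π j ≠ 0) :
    (List.ofFn π).Pairwise MayPrecede ↔
      (∀ k l, 0 < π k → π l = -π k → k < l) ∧
      (∀ k l, π k < 0 → π l < 0 → (k < l ↔ π l < π k)) := by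
  simp only [List.pairwise_ofFn, MayPrecede]
  constructor
  · intro h
    refine ⟨fun k l hk hl => ?_, fun k l hk hl => ⟨fun hkl => (h hkl).2 hk hl, fun hlk => ?_⟩⟩
    · rcases lt_trichotomy k l with hkl | rfl | hlk
      · exact hkl
      · omega
      · have := (h hlk).1; omega
    · rcases lt_trichotomy k l with hkl | rfl | hlk
      · exact hkl
      · omega
      · have := (h hlk).2 hl hk; omega
  · rintro ⟨hpos, hneg⟩ k l hkl
    refine ⟨fun hl => ?_, fun hk hl => (hneg k l hk hl).1 hkl⟩
    by_contra hk
    exact lt_asymm hkl (hpos l k (by have := hπ k; omega) (by omega))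

theorem isStdPermF_iff_isStdList_ofFn {n : ℕ} {π : Fin (2 * n) → ℤ} :
    IsStdPermF n π ↔ IsStdList n (List.ofFn π) := by
  constructor
  · rintro ⟨hsgn, hpw⟩
    have hmem := isSgnPermF_iff_forall_mem_ofFn.1 hsgn
    refine ⟨List.nodup_ofFn.2 (IsSgnPermF.injective hsgn), hmem,
      (pairwise_mayPrecede_ofFn_iff fun j => ((hmem (π j)).1 (List.mem_ofFn.2 ⟨j, rfl⟩)).1).2 hpw⟩
  · rintro ⟨-, hmem, hpw⟩
    exact ⟨isSgnPermF_iff_forall_mem_ofFn.2 hmem,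
      (pairwise_mayPrecede_ofFn_iff fun j => ((hmem (π j)).1 (List.mem_ofFn.2 ⟨j, rfl⟩)).1).1 hpw⟩

def stdListEquiv (n : ℕ) :
    {L : List ℤ // IsStdList n L} ≃ {π : Fin (2 * n) → ℤ // IsStdPermF n π} where
  toFun L := ⟨fun j => L.1[j.1]'(by rw [L.2.length_eq]; exact j.2),
    isStdPermF_iff_isStdList_ofFn.2 <| by
      convert L.2
      exact List.ext_getElem (by simp [L.2.length_eq]) (by simp)⟩
  invFun π := ⟨List.ofFn π.1, isStdPermF_iff_isStdList_ofFn.1 π.2⟩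
  left_inv L := Subtype.ext <| List.ext_getElem (by simp [L.2.length_eq]) (by simp)
  right_inv π := Subtype.ext <| funext fun j => by simp

theorem ofFn_stdListEquiv {n : ℕ} (L : {L : List ℤ // IsStdList n L}) :
    List.ofFn (stdListEquiv n L).1 = L.1 :=
  congrArg Subtype.val ((stdListEquiv n).symm_apply_apply L)

/-- The 0-based insertion positions of the word `w`, extended by `0` beyond `n`. -/
def positions {n : ℕ} (w : Fin n → ℕ) (i : ℕ) : ℕ := if h : i < n then w ⟨i, h⟩ - 1 else 0

section Words

variable {n : ℕ} {w : Fin n → ℕ} (hw : ∀ i : Fin n, 1 ≤ w i ∧ w i ≤ 2 * (i : ℕ) + 1)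
include hw

theorem positions_le : ∀ i < n, positions w i ≤ 2 * i := by
  intro i hi
  have : w ⟨i, hi⟩ ≤ 2 * i + 1 := (hw ⟨i, hi⟩).2
  simp only [positions, dif_pos hi]
  omega

theorem idxOf_filter_arcList_positions (k : Fin n) :
    ((arcList (positions w) n).filter (fun x : ℤ => |x| ≤ (k : ℤ) + 1)).idxOf ((k : ℤ) + 1) + 1
      = w k := by
  rw [idxOf_filter_arcList _ k.2 (positions_le hw k k.2)]
  have := (hw k).1
  simp only [positions, dif_pos k.2, Fin.eta]
  omega

end Words

noncomputable def wordEquivStdList (n : ℕ) :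
    {w : Fin n → ℕ // ∀ i, 1 ≤ w i ∧ w i ≤ 2 * (i : ℕ) + 1} ≃ {L : List ℤ // IsStdList n L} :=
  Equiv.ofBijective (fun w => ⟨arcList (positions w.1) n, isStdList_arcList _ n⟩) <| by
    refine ⟨fun w w' h => Subtype.ext <| funext fun k => ?_, fun L => ?_⟩
    · have hL : arcList (positions w.1) n = arcList (positions w'.1) n := congrArg Subtype.val h
      rw [← idxOf_filter_arcList_positions w.2, ← idxOf_filter_arcList_positions w'.2, hL]
    · obtain ⟨a, ha, hL⟩ := L.2.exists_eq_arcList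
      refine ⟨⟨fun i => a i + 1, fun i =>
        ⟨Nat.le_add_left 1 _, Nat.add_le_add_right (ha i i.2) 1⟩⟩, Subtype.ext ?_⟩
      rw [← hL]
      exact arcList_congr _ fun i hi => by simp [positions, hi]

theorem coe_wordEquivStdList {n : ℕ}
    (w : {w : Fin n → ℕ // ∀ i, 1 ≤ w i ∧ w i ≤ 2 * (i : ℕ) + 1}) :
    (wordEquivStdList n w : List ℤ) = arcList (positions w.1) n :=
  rfl

end StdPerm

open StdPerm

theorem stmt_7 (n : ℕ) :
    {w : Fin n → ℕ | ∀ i, 1 ≤ w i ∧ w i ≤ 2*(i:ℕ) + 1}.ncard =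
        Nat.doubleFactorial (2*n - 1) ∧
      ∃ e : {w : Fin n → ℕ // ∀ i, 1 ≤ w i ∧ w i ≤ 2*(i:ℕ) + 1} ≃
          {π : Fin (2*n) → ℤ // IsStdPermF n π},
        ∀ (w : {w : Fin n → ℕ // ∀ i, 1 ≤ w i ∧ w i ≤ 2*(i:ℕ) + 1})
          (k : Fin n) (p : Fin (2*n)), (e w).val p = ((k:ℕ) + 1 : ℤ) →
            w.val k =
              (Finset.univ.filter
                (fun j : Fin (2*n) => j ≤ p ∧ |(e w).val j| ≤ ((k:ℕ) + 1 : ℤ))).card := by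
  refine ⟨ncard_words_eq_doubleFactorial n, (wordEquivStdList n).trans (stdListEquiv n),
    fun w k p hp => ?_⟩
  set L := arcList (positions w.1) n
  have hstd : IsStdList n L := isStdList_arcList _ n
  have hpL : (p : ℕ) < L.length := by rw [hstd.length_eq]; exact p.2
  have hLp : L[(p : ℕ)] = (k : ℤ) + 1 := hp
  have hsmall : |L[(p : ℕ)]| ≤ (k : ℤ) + 1 := by rw [hLp, abs_of_nonneg (by positivity)]
  rw [card_filter_le_and_eq_countP_take_ofFn _ p (fun x : ℤ => |x| ≤ (k : ℤ) + 1),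
    Equiv.trans_apply, ofFn_stdListEquiv, coe_wordEquivStdList,
    List.countP_take_add_one_eq_idxOf_filter hstd.1 hpL (decide_eq_true hsmall), hLp]
  exact (idxOf_filter_arcList_positions w.2 k).symm
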